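/- arXiv:1203.5626 — 5 statements merged into one kernel-verified Lean document; each statement's English description precedes it below -/
import Mathlib

section
/- For an absolutely continuous random vector Y in ℝ^p, directional symmetry of Y is equivalent to the condition Pr[Y ∈ C] = Pr[-Y ∈ C] for every closed convex cone C ⊆ ℝ^p. -/
open MeasureTheory ProbabilityTheory Metric
open scoped RealInnerProductSpace ENNReal

/-!
The map `x ↦ ‖x‖⁻¹ • x` fixes every set closed under nonnegative scaling, so `Y` and `-Y` give the
same mass to every closed convex cone exactly when `Y/‖Y‖` and `-Y/‖Y‖ = (-Y)/‖-Y‖` do. For the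
converse, the σ-algebra generated by closed convex cones already makes `x ↦ ‖x‖⁻¹ • x` measurable:
for `c > 0` the set `{x | c ≤ ⟪d, x/‖x‖⟫}` is the ice-cream cone `{x | c‖x‖ ≤ ⟪d, x⟫}` minus the
origin, and the coordinates of `x/‖x‖` in an orthonormal basis are such inner products. Since
closed convex cones form a π-system, two finite measures that agree on them have the same image under normalisation.
-/

open MeasurableSpace Set

section Cones

variable (E : Type*) [NormedAddCommGroup E] [NormedSpace ℝ E]

def closedConvexCones : Set (Set E) :=
  {C | IsClosed C ∧ Convex ℝ C ∧ ∀ r : ℝ, 0 ≤ r → ∀ x ∈ C, r • x ∈ C}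

variable {E}

theorem univ_mem_closedConvexCones : (univ : Set E) ∈ closedConvexCones E :=
  ⟨isClosed_univ, convex_univ, fun _ _ _ _ => mem_univ _⟩

theorem singleton_zero_mem_closedConvexCones : ({0} : Set E) ∈ closedConvexCones E :=
  ⟨isClosed_singleton, convex_singleton 0, fun r _ x hx => by simp [mem_singleton_iff.1 hx]⟩

theorem isPiSystem_closedConvexCones : IsPiSystem (closedConvexCones E) :=
  fun _ ⟨hC, hCc, hCs⟩ _ ⟨hD, hDc, hDs⟩ _ =>
    ⟨hC.inter hD, hCc.inter hDc, fun r hr x hx => ⟨hCs r hr x hx.1, hDs r hr x hx.2⟩⟩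

theorem inv_norm_smul_mem_iff {C : Set E} (hC : ∀ r : ℝ, 0 ≤ r → ∀ x ∈ C, r • x ∈ C) (x : E) :
    ‖x‖⁻¹ • x ∈ C ↔ x ∈ C := by
  rcases eq_or_ne x 0 with rfl | hx
  · simp
  refine ⟨fun h => ?_, hC _ (inv_nonneg.2 (norm_nonneg x)) x⟩
  simpa [smul_smul, norm_ne_zero_iff.2 hx] using hC ‖x‖ (norm_nonneg x) _ h

theorem preimage_inv_norm_smul_of_mem_closedConvexCones {C : Set E}
    (hC : C ∈ closedConvexCones E) : (fun x : E => ‖x‖⁻¹ • x) ⁻¹' C = C :=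
  ext (inv_norm_smul_mem_iff hC.2.2)

end Cones

section InnerProductSpace

variable {E : Type*} [NormedAddCommGroup E] [InnerProductSpace ℝ E]

theorem setOf_mul_norm_le_inner_mem_closedConvexCones (d : E) {c : ℝ} (hc : 0 ≤ c) :
    {x : E | c * ‖x‖ ≤ ⟪d, x⟫} ∈ closedConvexCones E := by
  refine ⟨isClosed_le (by fun_prop) (by fun_prop), fun x hx y hy a b ha hb hab => ?_,
    fun r hr x hx => ?_⟩
  · have hnorm : ‖a • x + b • y‖ ≤ a * ‖x‖ + b * ‖y‖ := by
      simpa [norm_smul, abs_of_nonneg ha, abs_of_nonneg hb] using norm_add_le (a • x) (b • y)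
    simp only [mem_ofPred_eq, inner_add_right, real_inner_smul_right] at hx hy ⊢
    nlinarith [mul_le_mul_of_nonneg_left hnorm hc]
  · simp only [mem_ofPred_eq, norm_smul, real_inner_smul_right, Real.norm_of_nonneg hr] at hx ⊢
    nlinarith

theorem measurableSet_le_inner_inv_norm_smul (d : E) {c : ℝ} (hc : 0 < c) :
    MeasurableSet[generateFrom (closedConvexCones E)] {x : E | c ≤ ⟪d, ‖x‖⁻¹ • x⟫} := by
  have hcone : {x : E | c ≤ ⟪d, ‖x‖⁻¹ • x⟫} = {x | c * ‖x‖ ≤ ⟪d, x⟫} \ {0} := by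
    ext x
    rcases eq_or_ne x 0 with rfl | hx
    · simp [hc.not_ge]
    simp only [mem_ofPred_eq, mem_sdiff, mem_singleton_iff, hx, not_false_eq_true, and_true,
      real_inner_smul_right]
    rw [le_inv_mul_iff₀ (norm_pos_iff.2 hx), mul_comm]
  rw [hcone]
  exact (measurableSet_generateFrom (setOf_mul_norm_le_inner_mem_closedConvexCones d hc.le)).diff
    (measurableSet_generateFrom singleton_zero_mem_closedConvexCones)

theorem measurable_inner_inv_norm_smul (d : E) :
    Measurable[generateFrom (closedConvexCones E)] fun x : E => ⟪d, ‖x‖⁻¹ • x⟫ := by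
  refine measurable_of_Ioi fun c => ?_
  rcases le_or_gt 0 c with hc | hc
  · have hunion : (fun x : E => ⟪d, ‖x‖⁻¹ • x⟫) ⁻¹' Ioi c =
        ⋃ n : ℕ, {x | c + 1 / (n + 1) ≤ ⟪d, ‖x‖⁻¹ • x⟫} := by
      ext x
      simp only [mem_preimage, mem_Ioi, mem_iUnion, mem_ofPred_eq]
      constructor
      · intro h
        obtain ⟨n, hn⟩ := exists_nat_one_div_lt (sub_pos.2 h)
        exact ⟨n, by linarith⟩
      · rintro ⟨n, hn⟩
        linarith [Nat.one_div_pos_of_nat (α := ℝ) (n := n)]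
    rw [hunion]
    exact .iUnion fun n => measurableSet_le_inner_inv_norm_smul d (by positivity)
  · have hcompl : (fun x : E => ⟪d, ‖x‖⁻¹ • x⟫) ⁻¹' Ioi c =
        {x | -c ≤ ⟪-d, ‖x‖⁻¹ • x⟫}ᶜ := by
      ext x
      simp [inner_neg_left]
    rw [hcompl]
    exact (measurableSet_le_inner_inv_norm_smul (-d) (neg_pos.2 hc)).compl

variable [FiniteDimensional ℝ E] [MeasurableSpace E] [BorelSpace E]

theorem measurable_inv_norm_smul_generateFrom_closedConvexCones :
    Measurable[generateFrom (closedConvexCones E)] fun x : E => ‖x‖⁻¹ • x := by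
  let b := stdOrthonormalBasis ℝ E
  have hrepr : (fun x : E => ‖x‖⁻¹ • x) = fun x => ∑ i, ⟪b i, ‖x‖⁻¹ • x⟫ • b i :=
    funext fun x => (b.sum_repr' _).symm
  rw [hrepr]
  exact Finset.measurable_sum _ fun i _ => (measurable_inner_inv_norm_smul (b i)).smul_const _

theorem map_inv_norm_smul_eq_iff (μ ν : Measure E) [IsFiniteMeasure μ] :
    μ.map (fun x => ‖x‖⁻¹ • x) = ν.map (fun x => ‖x‖⁻¹ • x) ↔
      ∀ C ∈ closedConvexCones E, μ C = ν C := by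
  have hmeas : Measurable fun x : E => ‖x‖⁻¹ • x := by fun_prop
  have hle : generateFrom (closedConvexCones E) ≤ ‹MeasurableSpace E› :=
    generateFrom_le fun C hC => hC.1.measurableSet
  constructor
  · intro h C hC
    rw [← preimage_inv_norm_smul_of_mem_closedConvexCones hC, ← Measure.map_apply hmeas
      hC.1.measurableSet, h, Measure.map_apply hmeas hC.1.measurableSet]
  · intro h
    ext B hB
    rw [Measure.map_apply hmeas hB, Measure.map_apply hmeas hB]
    exact ext_on_measurableSpace_of_generate_finite _ _ h hle rfl isPiSystem_closedConvexCones
      (h _ univ_mem_closedConvexCones) (measurable_inv_norm_smul_generateFrom_closedConvexCones hB)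

end InnerProductSpace

theorem reverse_stein_stmt2_general {p : ℕ} {Ω : Type*} [MeasureSpace Ω]
    [IsProbabilityMeasure (ℙ : Measure Ω)]
    (Y : Ω → EuclideanSpace ℝ (Fin p)) (hY : Measurable Y) :
    (Measure.map (fun ω => ‖Y ω‖⁻¹ • Y ω) (ℙ : Measure Ω)
       = Measure.map (fun ω => -(‖Y ω‖⁻¹ • Y ω)) (ℙ : Measure Ω))
    ↔ ∀ C : Set (EuclideanSpace ℝ (Fin p)), IsClosed C → Convex ℝ C →
        (∀ r : ℝ, 0 ≤ r → ∀ x ∈ C, r • x ∈ C) →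
        (ℙ : Measure Ω) {ω | Y ω ∈ C} = (ℙ : Measure Ω) {ω | -Y ω ∈ C} := by
  have hN : Measurable fun x : EuclideanSpace ℝ (Fin p) => ‖x‖⁻¹ • x := by fun_prop
  have hlaw : Measure.map (fun ω => ‖Y ω‖⁻¹ • Y ω) ℙ = ((ℙ : Measure Ω).map Y).map fun x => ‖x‖⁻¹ • x :=
    (Measure.map_map hN hY).symm
  have hlaw_neg : Measure.map (fun ω => -(‖Y ω‖⁻¹ • Y ω)) ℙ
      = ((ℙ : Measure Ω).map (-Y)).map fun x => ‖x‖⁻¹ • x := by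
    rw [Measure.map_map hN hY.neg]
    congr 1
    funext ω
    simp [norm_neg, smul_neg]
  rw [hlaw, hlaw_neg, map_inv_norm_smul_eq_iff]
  simp only [closedConvexCones, mem_ofPred_eq, and_imp]
  refine forall_congr' fun C => imp_congr_right fun hC => imp_congr_right fun _ =>
    imp_congr_right fun _ => ?_
  rw [Measure.map_apply hY hC.measurableSet, Measure.map_apply hY.neg hC.measurableSet]
  rfl

/-- For an absolutely continuous random vector `Y` in `ℝ^p`,
directional symmetry of `Y` (i.e. `Y/‖Y‖ ≐ -Y/‖Y‖`) is equivalent to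
`Pr[Y ∈ C] = Pr[-Y ∈ C]` for every closed convex cone `C ⊆ ℝ^p`. -/
theorem reverse_stein_stmt2 {p : ℕ} {Ω : Type*} [MeasureSpace Ω]
    [IsProbabilityMeasure (ℙ : Measure Ω)]
    (Y : Ω → EuclideanSpace ℝ (Fin p)) (hY : Measurable Y)
    (habs : Measure.map Y ℙ ≪ volume) :
    (Measure.map (fun ω => ‖Y ω‖⁻¹ • Y ω) (ℙ : Measure Ω)
       = Measure.map (fun ω => -(‖Y ω‖⁻¹ • Y ω)) (ℙ : Measure Ω))
    ↔ ∀ C : Set (EuclideanSpace ℝ (Fin p)), IsClosed C → Convex ℝ C →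
        (∀ r : ℝ, 0 ≤ r → ∀ x ∈ C, r • x ∈ C) →
        (ℙ : Measure Ω) {ω | Y ω ∈ C} = (ℙ : Measure Ω) {ω | -Y ω ∈ C} :=
  reverse_stein_stmt2_general Y hY
end

section
/- Fix δ, δ₀, X ∈ ℝ^p and for γ ∈ [0,1] define the shrinkage estimate δ̂_γ = γ(X - δ₀) + δ₀. There exists γ ∈ [0,1) with ‖δ̂_γ - δ‖ < ‖X - δ‖ if and only if ‖X - (δ₀+δ)/2‖ > ‖δ - δ₀‖/2, i.e., iff X lies outside the closed ball of radius ‖δ - δ₀‖/2 centered at the midpoint of δ₀ and δ. -/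
/-!
Write `u = X - δ₀`, `w = X - δ` and `s = 1 - γ ∈ (0, 1]`, so that `δ̂_γ - δ = w - s • u` and
`‖w - s • u‖² = ‖w‖² - s (2⟪u, w⟫ - s ‖u‖²)`. Hence some `s` shortens `w` exactly when
`⟪u, w⟫ > 0`. By the parallelogram law, `‖(u + w)/2‖² - ‖(u - w)/2‖² = ⟪u, w⟫`, and
`(u + w)/2 = X - (δ₀ + δ)/2`, `u - w = δ - δ₀`: this is Thales' theorem, `⟪u, w⟫ > 0` iff `X` lies
outside the sphere with diameter `[δ₀, δ]`.
-/

open RealInnerProductSpace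

section

variable {E : Type*} [NormedAddCommGroup E] [InnerProductSpace ℝ E]

lemma norm_sub_smul_sq_real (w u : E) (s : ℝ) :
    ‖w - s • u‖ ^ 2 = ‖w‖ ^ 2 - s * (2 * ⟪u, w⟫ - s * ‖u‖ ^ 2) := by
  rw [norm_sub_sq_real, norm_smul, real_inner_smul_right, real_inner_comm, mul_pow,
    Real.norm_eq_abs, sq_abs]
  ring

lemma exists_norm_sub_smul_lt_iff (w u : E) :
    (∃ s ∈ Set.Ioc (0 : ℝ) 1, ‖w - s • u‖ < ‖w‖) ↔ 0 < ⟪u, w⟫ := by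
  simp_rw [← sq_lt_sq₀ (norm_nonneg _) (norm_nonneg _), norm_sub_smul_sq_real]
  constructor
  · rintro ⟨s, ⟨hs0, -⟩, hlt⟩
    have : s * ‖u‖ ^ 2 < 2 * ⟪u, w⟫ := by nlinarith
    nlinarith [mul_nonneg hs0.le (sq_nonneg ‖u‖)]
  · intro hpos
    have hu : 0 < ‖u‖ ^ 2 := by
      refine pow_pos (norm_pos_iff.mpr ?_) 2
      rintro rfl
      simp at hpos
    -- `s = min 1 (⟪u, w⟫ / ‖u‖²)` keeps `s ‖u‖² ≤ ⟪u, w⟫ < 2 ⟪u, w⟫`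
    have hs : 0 < min 1 (⟪u, w⟫ / ‖u‖ ^ 2) := lt_min one_pos (by positivity)
    have hle : min 1 (⟪u, w⟫ / ‖u‖ ^ 2) * ‖u‖ ^ 2 ≤ ⟪u, w⟫ :=
      (le_div_iff₀ hu).mp (min_le_right _ _)
    refine ⟨_, ⟨hs, min_le_left _ _⟩, ?_⟩
    nlinarith

lemma inner_pos_iff_norm_sub_div_two_lt (u w : E) :
    0 < ⟪u, w⟫ ↔ ‖u - w‖ / 2 < ‖(2 : ℝ)⁻¹ • (u + w)‖ := by
  rw [← sq_lt_sq₀ (by positivity) (norm_nonneg _), norm_smul, div_pow, mul_pow,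
    norm_add_sq_real, norm_sub_sq_real, Real.norm_of_nonneg (by norm_num : (0 : ℝ) ≤ 2⁻¹)]
  constructor <;> intro h <;> linarith

end

/-- For the shrinkage estimate `δ̂_γ = γ(X - δ₀) + δ₀`, some `γ ∈ [0,1)`
strictly reduces the distance to `δ` iff `X` lies outside the closed ball of radius
`‖δ - δ₀‖/2` centered at the midpoint `(δ₀ + δ)/2`. -/
theorem reverse_stein_stmt5 {p : ℕ} (X δ δ₀ : EuclideanSpace ℝ (Fin p)) :
    (∃ γ ∈ Set.Ico (0 : ℝ) 1, ‖γ • (X - δ₀) + δ₀ - δ‖ < ‖X - δ‖)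
      ↔ ‖X - (2 : ℝ)⁻¹ • (δ₀ + δ)‖ > ‖δ - δ₀‖ / 2 := by
  have hshrink (γ : ℝ) : γ • (X - δ₀) + δ₀ - δ = (X - δ) - (1 - γ) • (X - δ₀) := by module
  have hmid : X - (2 : ℝ)⁻¹ • (δ₀ + δ) = (2 : ℝ)⁻¹ • ((X - δ₀) + (X - δ)) := by module
  have hdiam : δ - δ₀ = (X - δ₀) - (X - δ) := by abel
  rw [gt_iff_lt, hmid, hdiam, ← inner_pos_iff_norm_sub_div_two_lt,
    ← exists_norm_sub_smul_lt_iff]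
  simp only [hshrink]
  constructor
  · rintro ⟨γ, ⟨hγ0, hγ1⟩, hlt⟩
    exact ⟨1 - γ, ⟨by linarith, by linarith⟩, hlt⟩
  · rintro ⟨s, ⟨hs0, hs1⟩, hlt⟩
    exact ⟨1 - s, ⟨by linarith, by linarith⟩, by rwa [sub_sub_cancel]⟩
end

section
/- For p ≥ 3, fixed δ ≠ δ₀ ∈ ℝ^p, σ > 0, and X absolutely continuous with the event sets having positive probability where they differ: Pr[‖δ̂⁺_JS(X;δ₀) - δ‖ < ‖X - δ‖] ≥ Pr[‖δ̂_JS(X;δ₀) - δ‖ < ‖X - δ‖], with strict inequality whenever Pr[X ∈ (B₁ \ B₂) \ D] > 0, where B₁ is the ball of radius σ√(p-2) about δ₀, B₂ the ball of radius ‖δ₀-δ‖ about δ, and D the improvement set of δ̂_JS. -/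
open MeasureTheory ProbabilityTheory Metric

/-- The (untruncated) James–Stein estimator. -/
noncomputable def jsEst {p : ℕ} (σ : ℝ) (x δ₀ : EuclideanSpace ℝ (Fin p)) :
    EuclideanSpace ℝ (Fin p) :=
  (1 - σ ^ 2 * ((p : ℝ) - 2) / ‖x - δ₀‖ ^ 2) • (x - δ₀) + δ₀

/-- The plus-rule (positive-part) James–Stein estimator. -/
noncomputable def jsPlus {p : ℕ} (σ : ℝ) (x δ₀ : EuclideanSpace ℝ (Fin p)) :
    EuclideanSpace ℝ (Fin p) :=
  (max (1 - σ ^ 2 * ((p : ℝ) - 2) / ‖x - δ₀‖ ^ 2) 0) • (x - δ₀) + δ₀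

/-!
Pointwise, the plus rule improves on `X` wherever `δ̂_JS` does: where the shrinkage factor
`c` is nonnegative the two estimators agree, and where `c ≤ 0` the plus rule returns `δ₀`,
and `‖c u + v‖ < ‖u + v‖` with `c ≤ 0` already forces `‖v‖ < ‖u + v‖`
(`u = X - δ₀`, `v = δ₀ - δ`). On the ball `B₁` the factor is nonpositive, so there the plus
rule improves on `X` exactly off `B₂`, which gives the strict gain on `(B₁ \ B₂) \ D`.
-/

lemma norm_lt_norm_add_of_norm_smul_add_lt {E : Type*} [NormedAddCommGroup E]
    [InnerProductSpace ℝ E] {c : ℝ} {u v : E} (hc : c ≤ 0)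
    (h : ‖c • u + v‖ < ‖u + v‖) : ‖v‖ < ‖u + v‖ := by
  have hsq : c ^ 2 * ‖u‖ ^ 2 + 2 * (c * inner ℝ u v) < ‖u‖ ^ 2 + 2 * inner ℝ u v := by
    have := pow_lt_pow_left₀ h (norm_nonneg _) two_ne_zero
    rw [norm_add_sq_real, norm_add_sq_real, norm_smul, real_inner_smul_left, mul_pow,
      Real.norm_eq_abs, sq_abs] at this
    linarith
  -- dividing `hsq` by `1 - c > 0` gives `(1 + c) ‖u‖² + 2 ⟪u, v⟫ > 0`
  have hpos : 0 < ‖u‖ ^ 2 + 2 * inner ℝ u v := by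
    nlinarith [sq_nonneg ‖u‖]
  rw [← sq_lt_sq₀ (norm_nonneg _) (norm_nonneg _), norm_add_sq_real]
  linarith

section JamesStein

variable {p : ℕ} (σ : ℝ) (x δ₀ δ : EuclideanSpace ℝ (Fin p))

noncomputable def jsShrink : ℝ := 1 - σ ^ 2 * ((p : ℝ) - 2) / ‖x - δ₀‖ ^ 2

lemma jsEst_eq : jsEst σ x δ₀ = jsShrink σ x δ₀ • (x - δ₀) + δ₀ := rfl

lemma jsPlus_eq : jsPlus σ x δ₀ = max (jsShrink σ x δ₀) 0 • (x - δ₀) + δ₀ := rfl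

lemma jsPlus_eq_jsEst_of_nonneg (h : 0 ≤ jsShrink σ x δ₀) : jsPlus σ x δ₀ = jsEst σ x δ₀ := by
  rw [jsPlus_eq, jsEst_eq, max_eq_left h]

lemma jsPlus_eq_of_nonpos (h : jsShrink σ x δ₀ ≤ 0) : jsPlus σ x δ₀ = δ₀ := by
  rw [jsPlus_eq, max_eq_right h, zero_smul, zero_add]

lemma jsPlus_improves_of_jsEst_improves (h : ‖jsEst σ x δ₀ - δ‖ < ‖x - δ‖) :
    ‖jsPlus σ x δ₀ - δ‖ < ‖x - δ‖ := by
  rcases le_total 0 (jsShrink σ x δ₀) with hc | hc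
  · rwa [jsPlus_eq_jsEst_of_nonneg σ x δ₀ hc]
  · have hsplit : x - δ = (x - δ₀) + (δ₀ - δ) := (sub_add_sub_cancel x δ₀ δ).symm
    rw [jsEst_eq, add_sub_assoc, hsplit] at h
    rw [jsPlus_eq_of_nonpos σ x δ₀ hc, hsplit]
    exact norm_lt_norm_add_of_norm_smul_add_lt hc h

lemma jsShrink_nonpos_of_mem_ball (hx : x ∈ ball δ₀ (σ * Real.sqrt ((p : ℝ) - 2)))
    (hxδ₀ : x ≠ δ₀) : jsShrink σ x δ₀ ≤ 0 := by
  rw [mem_ball, dist_eq_norm] at hx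
  have hu : 0 < ‖x - δ₀‖ := norm_pos_iff.2 (sub_ne_zero.2 hxδ₀)
  have hsqrt : 0 < Real.sqrt ((p : ℝ) - 2) := by
    by_contra! h
    rw [le_antisymm h (Real.sqrt_nonneg _), mul_zero] at hx
    linarith
  have hlt : ‖x - δ₀‖ ^ 2 < σ ^ 2 * ((p : ℝ) - 2) := by
    rw [← Real.sq_sqrt (Real.sqrt_pos.1 hsqrt).le, ← mul_pow]
    exact pow_lt_pow_left₀ hx (norm_nonneg _) two_ne_zero
  rw [jsShrink, sub_nonpos, one_le_div (by positivity)]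
  exact hlt.le

lemma jsPlus_eq_of_mem_ball (hx : x ∈ ball δ₀ (σ * Real.sqrt ((p : ℝ) - 2))) :
    jsPlus σ x δ₀ = δ₀ := by
  by_cases hxδ₀ : x = δ₀
  · rw [jsPlus_eq, hxδ₀, sub_self, smul_zero, zero_add]
  · exact jsPlus_eq_of_nonpos σ x δ₀ (jsShrink_nonpos_of_mem_ball σ x δ₀ hx hxδ₀)

lemma jsPlus_improves_of_mem_ball_diff_closedBall
    (hx : x ∈ ball δ₀ (σ * Real.sqrt ((p : ℝ) - 2)) \ closedBall δ ‖δ₀ - δ‖) :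
    ‖jsPlus σ x δ₀ - δ‖ < ‖x - δ‖ := by
  rw [jsPlus_eq_of_mem_ball σ x δ₀ hx.1, ← dist_eq_norm x]
  exact not_le.1 hx.2

end JamesStein

lemma measurable_jsEst {p : ℕ} (σ : ℝ) (δ₀ : EuclideanSpace ℝ (Fin p)) :
    Measurable fun x ↦ jsEst σ x δ₀ := by
  unfold jsEst
  fun_prop

lemma measure_lt_measure_of_subset_of_pos_diff {α : Type*} [MeasurableSpace α]
    {μ : Measure α} [IsFiniteMeasure μ] {s t u : Set α} (hs : NullMeasurableSet s μ)
    (hst : s ⊆ t) (hut : u ⊆ t) (hu : 0 < μ (u \ s)) : μ s < μ t :=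
  calc μ s < μ s + μ (u \ s) := ENNReal.lt_add_right (measure_ne_top μ s) hu.ne'
    _ = μ (s ∪ u) := measure_add_sdiff hs u
    _ ≤ μ t := measure_mono (Set.union_subset hst hut)

theorem reverse_stein_stmt14_general {p : ℕ} (σ : ℝ)
    {Ω : Type*} [MeasureSpace Ω] [IsProbabilityMeasure (ℙ : Measure Ω)]
    (X : Ω → EuclideanSpace ℝ (Fin p)) (hX : Measurable X)
    (δ δ₀ : EuclideanSpace ℝ (Fin p)) :
    (ℙ : Measure Ω) {ω | ‖jsEst σ (X ω) δ₀ - δ‖ < ‖X ω - δ‖}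
        ≤ (ℙ : Measure Ω) {ω | ‖jsPlus σ (X ω) δ₀ - δ‖ < ‖X ω - δ‖} ∧
    (0 < (ℙ : Measure Ω) {ω | X ω ∈
          (ball δ₀ (σ * Real.sqrt ((p : ℝ) - 2)) \ closedBall δ ‖δ₀ - δ‖)
            \ {x | ‖jsEst σ x δ₀ - δ‖ < ‖x - δ‖}} →
      (ℙ : Measure Ω) {ω | ‖jsEst σ (X ω) δ₀ - δ‖ < ‖X ω - δ‖}
        < (ℙ : Measure Ω) {ω | ‖jsPlus σ (X ω) δ₀ - δ‖ < ‖X ω - δ‖}) := by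
  have hST : {ω | ‖jsEst σ (X ω) δ₀ - δ‖ < ‖X ω - δ‖}
      ⊆ {ω | ‖jsPlus σ (X ω) δ₀ - δ‖ < ‖X ω - δ‖} :=
    fun ω ↦ jsPlus_improves_of_jsEst_improves σ (X ω) δ₀ δ
  have hS : MeasurableSet {ω | ‖jsEst σ (X ω) δ₀ - δ‖ < ‖X ω - δ‖} :=
    measurableSet_lt (((measurable_jsEst σ δ₀).comp hX).sub_const δ).norm (hX.sub_const δ).norm
  refine ⟨measure_mono hST, fun hpos ↦ ?_⟩
  refine measure_lt_measure_of_subset_of_pos_diff hS.nullMeasurableSet hST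
    (u := {ω | X ω ∈ ball δ₀ (σ * Real.sqrt ((p : ℝ) - 2)) \ closedBall δ ‖δ₀ - δ‖})
    (fun ω hω ↦ jsPlus_improves_of_mem_ball_diff_closedBall σ (X ω) δ₀ δ hω) ?_
  exact hpos

/-- Pitman-closeness comparison of the truncated vs. untruncated
James–Stein estimator: `Pr[‖δ̂⁺_JS - δ‖ < ‖X - δ‖] ≥ Pr[‖δ̂_JS - δ‖ < ‖X - δ‖]`, with
strict inequality whenever `Pr[X ∈ (B₁ \ B₂) \ D] > 0`. -/
theorem reverse_stein_stmt14 {p : ℕ} (hp : 3 ≤ p) (σ : ℝ) (hσ : 0 < σ)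
    {Ω : Type*} [MeasureSpace Ω] [IsProbabilityMeasure (ℙ : Measure Ω)]
    (X : Ω → EuclideanSpace ℝ (Fin p)) (hX : Measurable X)
    (habs : Measure.map X (ℙ : Measure Ω) ≪ volume)
    (δ δ₀ : EuclideanSpace ℝ (Fin p)) (hne : δ₀ ≠ δ) :
    (ℙ : Measure Ω) {ω | ‖jsEst σ (X ω) δ₀ - δ‖ < ‖X ω - δ‖}
        ≤ (ℙ : Measure Ω) {ω | ‖jsPlus σ (X ω) δ₀ - δ‖ < ‖X ω - δ‖} ∧
    (0 < (ℙ : Measure Ω) {ω | X ω ∈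
          (ball δ₀ (σ * Real.sqrt ((p : ℝ) - 2)) \ closedBall δ ‖δ₀ - δ‖)
            \ {x | ‖jsEst σ x δ₀ - δ‖ < ‖x - δ‖}} →
      (ℙ : Measure Ω) {ω | ‖jsEst σ (X ω) δ₀ - δ‖ < ‖X ω - δ‖}
        < (ℙ : Measure Ω) {ω | ‖jsPlus σ (X ω) δ₀ - δ‖ < ‖X ω - δ‖}) :=
  reverse_stein_stmt14_general σ X hX δ δ₀
end

section
/- Fix x, δ, δ₀ ∈ ℝ^p with ‖x - δ₀‖ < σ√(p-2) (so the plus-rule shrinkage factor is 0). If x is in the ball B₂ of radius ‖δ₀ - δ‖ centered at δ, then the untruncated James–Stein estimate satisfies ‖δ̂_JS(x;δ₀) - δ‖ > ‖x - δ‖. -/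
open Metric RealInnerProductSpace

/-- If `‖x - δ₀‖ < σ√(p-2)` (with `x ≠ δ₀`) and `x` lies in the ball
`B₂` of radius `‖δ₀ - δ‖` centered at `δ`, then the untruncated James–Stein estimate
overshoots: `‖δ̂_JS(x; δ₀) - δ‖ > ‖x - δ‖`. -/
theorem reverse_stein_stmt15 {p : ℕ} (hp : 3 ≤ p) (σ : ℝ) (hσ : 0 < σ)
    (x δ δ₀ : EuclideanSpace ℝ (Fin p)) (hxδ₀ : x ≠ δ₀)
    (hnear : ‖x - δ₀‖ < σ * Real.sqrt ((p : ℝ) - 2))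
    (hin : x ∈ ball δ ‖δ₀ - δ‖) :
    ‖jsEst σ x δ₀ - δ‖ > ‖x - δ‖ := by
  set u := x - δ₀ with hu_def
  set v := δ₀ - δ with hv_def
  have hu : u ≠ 0 := sub_ne_zero.mpr hxδ₀
  have hu0 : (0:ℝ) < ‖u‖ := norm_pos_iff.mpr hu
  have hp2 : (1:ℝ) ≤ (p:ℝ) - 2 := by
    have : (3:ℝ) ≤ (p:ℝ) := by exact_mod_cast hp
    linarith
  have ht : ‖u‖ ^ 2 < σ ^ 2 * ((p:ℝ) - 2) := by
    have h2 : (σ * Real.sqrt ((p:ℝ) - 2)) ^ 2 = σ ^ 2 * ((p:ℝ) - 2) := by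
      rw [mul_pow, Real.sq_sqrt (by linarith)]
    nlinarith [Real.sqrt_nonneg ((p:ℝ) - 2), hσ.le, norm_nonneg u]
  set t : ℝ := σ ^ 2 * ((p:ℝ) - 2) / ‖u‖ ^ 2 with ht_def
  have ht1 : 1 < t := (one_lt_div (by positivity)).mpr ht
  set s : ℝ := t - 1 with hs_def
  have hs0 : 0 < s := by linarith
  have hjs : jsEst σ x δ₀ - δ = v - s • u := by
    simp only [jsEst, ← hu_def, ← ht_def, hv_def, hs_def]
    module
  have hxd : x - δ = u + v := by
    simp only [hu_def, hv_def]
    abel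
  have hin' : ‖u + v‖ < ‖v‖ := by
    rw [← hxd]
    simpa [dist_eq_norm] using hin
  have hsq1 : ‖u + v‖ ^ 2 = ‖u‖ ^ 2 + 2 * (inner ℝ u v : ℝ) + ‖v‖ ^ 2 :=
    norm_add_sq_real u v
  have hsq2 : ‖v - s • u‖ ^ 2 = ‖v‖ ^ 2 - 2 * (s * (inner ℝ v u : ℝ)) + s ^ 2 * ‖u‖ ^ 2 := by
    rw [norm_sub_sq_real, real_inner_smul_right, norm_smul, Real.norm_eq_abs, abs_of_pos hs0]
    ring
  have hinner : (inner ℝ v u : ℝ) = (inner ℝ u v : ℝ) := real_inner_comm u v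
  have key : ‖u + v‖ ^ 2 < ‖v - s • u‖ ^ 2 := by
    have hlt : ‖u + v‖ ^ 2 < ‖v‖ ^ 2 := by
      have := hin'
      nlinarith [norm_nonneg (u + v), norm_nonneg v]
    nlinarith [sq_nonneg (‖u‖), hs0, hu0]
  have := lt_of_pow_lt_pow_left₀ 2 (norm_nonneg (v - s • u)) key
  rw [hjs, hxd]
  exact this
end

section
/- Suppose for each p: δ₀ is random and independent of X, Y = X - δ is spherically symmetric and absolutely continuous, and ‖δ₀ - δ‖/‖X - δ‖ = o(p^{1/2}) in probability as p → ∞. Then Pr_δ[‖X - δ₀‖ > ‖δ - δ₀‖] → 1 as p → ∞. -/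
/-!
Write `Y = X - δ` and `D = δ₀ - δ`. The event fails iff `‖Y - D‖ ≤ ‖D‖`, i.e. `‖Y‖² ≤ 2⟪Y, D⟫`,
which forces `‖Y‖ ≤ 2‖D‖ cos ∠(Y, D)`; if moreover `‖D‖/‖Y‖ < ε√p`, then `4ε² p cos² ∠(Y, D) > 1`.
Rotation invariance moves `D` onto any coordinate axis without changing the law of the angle,
and the squared direction cosines of `Y` along the `p` axes sum to at most one, so
`E[p cos² ∠(Y, D)] ≤ 1` (independence lets us condition on `D`). Markov's inequality then bounds
the failure probability by `P(‖D‖/‖Y‖ ≥ ε√p) + 4ε²`.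
-/

open MeasureTheory ProbabilityTheory Filter
open scoped ENNReal Topology RealInnerProductSpace
open InnerProductGeometry Module Real

section

variable {E : Type*} [NormedAddCommGroup E] [InnerProductSpace ℝ E]

theorem exists_linearIsometryEquiv_apply_eq {u v : E} (h : ‖u‖ = ‖v‖) :
    ∃ g : E ≃ₗᵢ[ℝ] E, g u = v :=
  ⟨_, Submodule.reflection_sub h⟩

theorem Orthonormal.sum_cos_angle_sq_le {ι : Type*} {v : ι → E} (hv : Orthonormal ℝ v)
    (s : Finset ι) (x : E) : ∑ i ∈ s, cos (angle x (v i)) ^ 2 ≤ 1 := by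
  rcases eq_or_ne x 0 with rfl | hx
  · simp
  have key : ∀ i, cos (angle x (v i)) ^ 2 = ⟪v i, x⟫ ^ 2 / ‖x‖ ^ 2 := fun i => by
    rw [cos_angle, hv.1 i, mul_one, div_pow, real_inner_comm]
  simp_rw [key, ← Finset.sum_div]
  rw [div_le_one (by positivity)]
  simpa using hv.sum_inner_products_le (s := s) (x := x)

theorem norm_le_two_mul_norm_mul_cos_angle {y d : E} (h : ‖y - d‖ ≤ ‖d‖) :
    ‖y‖ ≤ 2 * ‖d‖ * cos (angle y d) := by
  have hsq : ‖y‖ ^ 2 ≤ 2 * ⟪y, d⟫ := by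
    have := pow_le_pow_left₀ (norm_nonneg _) h 2
    rw [norm_sub_sq_real] at this
    linarith
  rcases eq_or_ne y 0 with rfl | hy
  · simp
  rw [← cos_angle_mul_norm_mul_norm] at hsq
  have : 0 < ‖y‖ := norm_pos_iff.2 hy
  nlinarith

theorem one_lt_two_mul_mul_cos_angle {y d : E} {r : ℝ} (hy : y ≠ 0) (h : ‖y - d‖ ≤ ‖d‖)
    (hr : ‖d‖ / ‖y‖ < r) : 1 < 2 * r * cos (angle y d) := by
  have hy : 0 < ‖y‖ := norm_pos_iff.2 hy
  have hdr : ‖d‖ < r * ‖y‖ := (div_lt_iff₀ hy).1 hr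
  have hcos := norm_le_two_mul_norm_mul_cos_angle h
  have hc : 0 < cos (angle y d) := by nlinarith [norm_nonneg d]
  nlinarith

theorem measurable_cos_angle [MeasurableSpace E] [OpensMeasurableSpace E]
    [SecondCountableTopology E] :
    Measurable fun z : E × E => cos (angle z.1 z.2) := by
  simp only [cos_angle]
  fun_prop

section RotationInvariant

variable [MeasurableSpace E] [BorelSpace E] {μ : Measure E}

theorem lintegral_comp_angle_eq (hμ : ∀ g : E ≃ₗᵢ[ℝ] E, μ.map g = μ) (F : ℝ → ℝ≥0∞)
    {d d' : E} (hd : d ≠ 0) (hd' : d' ≠ 0) :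
    ∫⁻ y, F (angle y d) ∂μ = ∫⁻ y, F (angle y d') ∂μ := by
  have hc : 0 < ‖d‖ / ‖d'‖ := by positivity
  obtain ⟨g, hg⟩ : ∃ g : E ≃ₗᵢ[ℝ] E, g d = (‖d‖ / ‖d'‖) • d' :=
    exists_linearIsometryEquiv_apply_eq (by
      rw [norm_smul, Real.norm_of_nonneg hc.le, div_mul_cancel₀ _ (norm_ne_zero_iff.2 hd')])
  have hangle : ∀ y, angle y d = angle (g y) d' := fun y => by
    rw [← g.toLinearIsometry.angle_map y d]
    simp [hg, angle_smul_right_of_pos _ _ hc]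
  simp_rw [hangle]
  conv_rhs => rw [← hμ g]
  exact (lintegral_map_equiv (fun y => F (angle y d')) g.toHomeomorph.toMeasurableEquiv).symm

theorem lintegral_finrank_mul_cos_angle_sq_le [FiniteDimensional ℝ E]
    (hμ : ∀ g : E ≃ₗᵢ[ℝ] E, μ.map g = μ) (d : E) :
    ∫⁻ y, ENNReal.ofReal (finrank ℝ E * cos (angle y d) ^ 2) ∂μ ≤ μ Set.univ := by
  rcases eq_or_ne d 0 with rfl | hd
  · simp
  set b := stdOrthonormalBasis ℝ E
  have hmeas : ∀ i, Measurable fun y => ENNReal.ofReal (cos (angle y (b i)) ^ 2) := fun i =>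
    ENNReal.measurable_ofReal.comp
      ((measurable_cos_angle.comp (measurable_id.prodMk measurable_const)).pow_const 2)
  calc ∫⁻ y, ENNReal.ofReal (finrank ℝ E * cos (angle y d) ^ 2) ∂μ
      = ∑ _i : Fin (finrank ℝ E), ∫⁻ y, ENNReal.ofReal (cos (angle y d) ^ 2) ∂μ := by
        simp_rw [ENNReal.ofReal_mul (Nat.cast_nonneg _), ENNReal.ofReal_natCast]
        rw [lintegral_const_mul' _ _ (ENNReal.natCast_ne_top _)]
        simp
    _ = ∑ i, ∫⁻ y, ENNReal.ofReal (cos (angle y (b i)) ^ 2) ∂μ := by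
        congr 1 with i
        exact lintegral_comp_angle_eq hμ (fun θ => ENNReal.ofReal (cos θ ^ 2)) hd
          (b.orthonormal.ne_zero i)
    _ = ∫⁻ y, ENNReal.ofReal (∑ i, cos (angle y (b i)) ^ 2) ∂μ := by
        rw [← lintegral_finsetSum _ fun i _ => hmeas i]
        simp_rw [ENNReal.ofReal_sum_of_nonneg fun i _ => sq_nonneg _]
    _ ≤ ∫⁻ _, 1 ∂μ := lintegral_mono fun y =>
        ENNReal.ofReal_le_one.2 (b.orthonormal.sum_cos_angle_sq_le _ y)
    _ = μ Set.univ := lintegral_one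

end RotationInvariant

section Independent

variable [FiniteDimensional ℝ E] [MeasurableSpace E] [BorelSpace E]
  {Ω : Type*} [MeasurableSpace Ω] {P : Measure Ω} [IsProbabilityMeasure P] {Y D : Ω → E}

theorem lintegral_finrank_mul_cos_angle_sq_le_one (hY : Measurable Y) (hD : Measurable D)
    (hind : IndepFun D Y P) (hrot : ∀ g : E ≃ₗᵢ[ℝ] E, P.map (fun ω => g (Y ω)) = P.map Y) :
    ∫⁻ ω, ENNReal.ofReal (finrank ℝ E * cos (angle (Y ω) (D ω)) ^ 2) ∂P ≤ 1 := by
  have hμ : ∀ g : E ≃ₗᵢ[ℝ] E, (P.map Y).map g = P.map Y := fun g => by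
    rw [Measure.map_map g.continuous.measurable hY]
    exact hrot g
  have hf : Measurable fun z : E × E => ENNReal.ofReal (finrank ℝ E * cos (angle z.2 z.1) ^ 2) :=
    ENNReal.measurable_ofReal.comp
      (((measurable_cos_angle.comp measurable_swap).pow_const 2).const_mul _)
  have := Measure.isProbabilityMeasure_map (μ := P) hY.aemeasurable
  calc ∫⁻ ω, ENNReal.ofReal (finrank ℝ E * cos (angle (Y ω) (D ω)) ^ 2) ∂P
      = ∫⁻ d, ∫⁻ y, ENNReal.ofReal (finrank ℝ E * cos (angle y d) ^ 2) ∂P.map Y ∂P.map D := by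
        rw [← lintegral_prod _ hf.aemeasurable,
          ← (indepFun_iff_map_prod_eq_prod_map_map hD.aemeasurable hY.aemeasurable).1 hind,
          lintegral_map hf (hD.prodMk hY)]
    _ ≤ ∫⁻ _, 1 ∂P.map D := lintegral_mono fun d =>
        (lintegral_finrank_mul_cos_angle_sq_le hμ d).trans_eq measure_univ
    _ = 1 := by simp [Measure.map_apply hD MeasurableSet.univ]

theorem measure_norm_sub_le_norm_le (hY : Measurable Y) (hD : Measurable D)
    (hind : IndepFun D Y P) (hrot : ∀ g : E ≃ₗᵢ[ℝ] E, P.map (fun ω => g (Y ω)) = P.map Y)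
    (hY0 : ∀ᵐ ω ∂P, Y ω ≠ 0) (ε : ℝ) :
    P {ω | ‖Y ω - D ω‖ ≤ ‖D ω‖}
      ≤ P {ω | ε * √(finrank ℝ E) ≤ ‖D ω‖ / ‖Y ω‖} + ENNReal.ofReal (4 * ε ^ 2) := by
  set f : Ω → ℝ≥0∞ := fun ω => ENNReal.ofReal (finrank ℝ E * cos (angle (Y ω) (D ω)) ^ 2)
  have hf : Measurable f := ENNReal.measurable_ofReal.comp
    (((measurable_cos_angle.comp (hY.prodMk hD)).pow_const 2).const_mul _)
  have hmarkov : P {ω | 1 ≤ ENNReal.ofReal (4 * ε ^ 2) * f ω} ≤ ENNReal.ofReal (4 * ε ^ 2) :=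
    calc P {ω | 1 ≤ ENNReal.ofReal (4 * ε ^ 2) * f ω}
        ≤ ∫⁻ ω, ENNReal.ofReal (4 * ε ^ 2) * f ω ∂P := by
          simpa using mul_meas_ge_le_lintegral₀ (hf.const_mul _).aemeasurable 1
      _ = ENNReal.ofReal (4 * ε ^ 2) * ∫⁻ ω, f ω ∂P :=
          lintegral_const_mul' _ _ ENNReal.ofReal_ne_top
      _ ≤ ENNReal.ofReal (4 * ε ^ 2) := mul_le_of_le_one_right'
          (lintegral_finrank_mul_cos_angle_sq_le_one hY hD hind hrot)
  have hsub : {ω | ‖Y ω - D ω‖ ≤ ‖D ω‖} ≤ᵐ[P]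
      ({ω | ε * √(finrank ℝ E) ≤ ‖D ω‖ / ‖Y ω‖} ∪ {ω | 1 ≤ ENNReal.ofReal (4 * ε ^ 2) * f ω} :
        Set Ω) := by
    filter_upwards [hY0] with ω hY0 hle
    refine or_iff_not_imp_left.2 fun hr => ?_
    have h := one_lt_two_mul_mul_cos_angle hY0 hle (not_le.1 hr)
    have : (2 * (ε * √(finrank ℝ E)) * cos (angle (Y ω) (D ω))) ^ 2
        = 4 * ε ^ 2 * (finrank ℝ E * cos (angle (Y ω) (D ω)) ^ 2) := by
      rw [mul_pow, mul_pow, mul_pow, Real.sq_sqrt (Nat.cast_nonneg _)]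
      ring
    show 1 ≤ ENNReal.ofReal (4 * ε ^ 2) * f ω
    rw [← ENNReal.ofReal_mul (by positivity), ← this, ← ENNReal.ofReal_one]
    exact ENNReal.ofReal_le_ofReal (one_lt_pow₀ h two_ne_zero).le
  calc P {ω | ‖Y ω - D ω‖ ≤ ‖D ω‖}
      ≤ P ({ω | ε * √(finrank ℝ E) ≤ ‖D ω‖ / ‖Y ω‖}
          ∪ {ω | 1 ≤ ENNReal.ofReal (4 * ε ^ 2) * f ω}) := measure_mono_ae hsub
    _ ≤ _ := (measure_union_le _ _).trans (by gcongr)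

end Independent

end

theorem ENNReal.tendsto_zero_of_forall_eventually_le_add {α : Type*} {l : Filter α}
    {c : α → ℝ≥0∞} {a : ℝ → α → ℝ≥0∞} {b : ℝ → ℝ≥0∞}
    (ha : ∀ ε > 0, Tendsto (a ε) l (𝓝 0)) (hb : Tendsto b (𝓝[>] 0) (𝓝 0))
    (hc : ∀ ε > 0, ∀ᶠ x in l, c x ≤ a ε x + b ε) : Tendsto c l (𝓝 0) := by
  refine ENNReal.tendsto_nhds_zero.2 fun η hη => ?_
  have hη2 : 0 < η / 2 := ENNReal.half_pos hη.ne'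
  obtain ⟨ε, hbε, hε⟩ :=
    ((ENNReal.tendsto_nhds_zero.1 hb _ hη2).and self_mem_nhdsWithin).exists
  filter_upwards [hc ε hε, ENNReal.tendsto_nhds_zero.1 (ha ε hε) _ hη2] with x hcx hax
  calc c x ≤ a ε x + b ε := hcx
    _ ≤ η / 2 + η / 2 := add_le_add hax hbε
    _ = η := ENNReal.add_halves η

/-- If for each `p` the target `δ₀` is independent of `X`,
`Y = X - δ` is spherically symmetric and absolutely continuous, and
`‖δ₀ - δ‖/‖X - δ‖ = o(p^{1/2})` in probability, then
`Pr[‖X - δ₀‖ > ‖δ - δ₀‖] → 1` as `p → ∞`. -/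
theorem reverse_stein_stmt18
    (Ω : ℕ → Type*) [∀ p, MeasureSpace (Ω p)]
    [∀ p, IsProbabilityMeasure (ℙ : Measure (Ω p))]
    (X δ₀ : ∀ p, Ω p → EuclideanSpace ℝ (Fin p))
    (δ : ∀ p, EuclideanSpace ℝ (Fin p))
    (hmX : ∀ p, Measurable (X p)) (hmδ₀ : ∀ p, Measurable (δ₀ p))
    (hindep : ∀ p, IndepFun (δ₀ p) (X p) (ℙ : Measure (Ω p)))
    (hsph : ∀ p, ∀ g : EuclideanSpace ℝ (Fin p) ≃ₗᵢ[ℝ] EuclideanSpace ℝ (Fin p),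
      Measure.map (fun ω => g (X p ω - δ p)) (ℙ : Measure (Ω p))
        = Measure.map (fun ω => X p ω - δ p) (ℙ : Measure (Ω p)))
    (habs : ∀ p, Measure.map (fun ω => X p ω - δ p) (ℙ : Measure (Ω p)) ≪ volume)
    (hsmall : ∀ ε : ℝ, 0 < ε →
      Tendsto (fun p => (ℙ : Measure (Ω p))
          {ω | ε * Real.sqrt p ≤ ‖δ₀ p ω - δ p‖ / ‖X p ω - δ p‖})
        atTop (𝓝 0)) :
    Tendsto (fun p => (ℙ : Measure (Ω p))
        {ω | ‖δ p - δ₀ p ω‖ < ‖X p ω - δ₀ p ω‖}) atTop (𝓝 1) := by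
  have hfail : ∀ ε : ℝ, ∀ᶠ p in atTop,
      (ℙ : Measure (Ω p)) {ω | ‖δ p - δ₀ p ω‖ < ‖X p ω - δ₀ p ω‖}ᶜ
        ≤ (ℙ : Measure (Ω p)) {ω | ε * Real.sqrt p ≤ ‖δ₀ p ω - δ p‖ / ‖X p ω - δ p‖}
          + ENNReal.ofReal (4 * ε ^ 2) := fun ε => by
    filter_upwards [eventually_gt_atTop 0] with p hp
    -- makes `volume` on `EuclideanSpace ℝ (Fin p)` atomless
    have : Nonempty (Fin p) := ⟨⟨0, hp⟩⟩
    have hY := (hmX p).sub_const (δ p)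
    have hY0 : ∀ᵐ ω ∂(ℙ : Measure (Ω p)), X p ω - δ p ≠ 0 :=
      ae_of_ae_map hY.aemeasurable ((habs p).ae_le (volume.ae_ne 0))
    have h := measure_norm_sub_le_norm_le hY ((hmδ₀ p).sub_const (δ p))
      ((hindep p).comp (measurable_sub_const _) (measurable_sub_const _)) (hsph p) hY0 ε
    rw [finrank_euclideanSpace_fin] at h
    convert h using 2
    ext ω
    simp [norm_sub_rev (δ p), sub_sub_sub_cancel_right]
  have hb : Tendsto (fun ε : ℝ => ENNReal.ofReal (4 * ε ^ 2)) (𝓝[>] 0) (𝓝 0) := by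
    have : Continuous fun ε : ℝ => ENNReal.ofReal (4 * ε ^ 2) :=
      ENNReal.continuous_ofReal.comp (by fun_prop)
    simpa using (this.tendsto 0).mono_left nhdsWithin_le_nhds
  have hE : ∀ p, MeasurableSet {ω | ‖δ p - δ₀ p ω‖ < ‖X p ω - δ₀ p ω‖} := fun p =>
    measurableSet_lt (measurable_const.sub (hmδ₀ p)).norm ((hmX p).sub (hmδ₀ p)).norm
  rw [← ENNReal.tendsto_const_sub_nhds_zero_iff ENNReal.one_ne_top fun p => prob_le_one]
  exact (ENNReal.tendsto_zero_of_forall_eventually_le_add hsmall hb fun ε _ => hfail ε).congr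
    fun p => prob_compl_eq_one_sub (hE p)
end
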